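/- arXiv:0811.2012 — 3 statements merged into one kernel-verified Lean document; each statement's English description precedes it below -/
import Mathlib

section
/- Let G be a graph, Z ⊆ V(G), and k a positive integer. Suppose every (k−1)-separation of G is Z-bad. Let {A,B} and {C,D} be k-separations of G with separators S = A∩B, T = C∩D and fragments A' = A−B, B' = B−A, C' = C−D, D' = D−C. If A' ∩ C' is not contained in Z and B' is not contained in Z, then |T ∩ A'| ≥ |S ∩ D'| and |S ∩ C'| ≥ |T ∩ B'|. -/
open SimpleGraph

/-- `{A, B}` is a separation of the graph `G` restricted to vertex set `W`:
`A ∪ B = W`, there is no edge between `A − B` and `B − A`, and both fragments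
`A − B` and `B − A` are nonempty. -/
def IsSepOn {V : Type*} (G : SimpleGraph V) (W A B : Set V) : Prop :=
  A ∪ B = W ∧ (∀ a ∈ A \ B, ∀ b ∈ B \ A, ¬ G.Adj a b) ∧
    (A \ B).Nonempty ∧ (B \ A).Nonempty

/-- `{A, B}` is a separation of `G`. -/
def IsSeparation {V : Type*} (G : SimpleGraph V) (A B : Set V) : Prop :=
  IsSepOn G Set.univ A B

/-- `{A, B}` is `Z`-good: `{A − Z, B − Z}` is a separation of `G − Z`. -/
def ZGood {V : Type*} (G : SimpleGraph V) (Z A B : Set V) : Prop :=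
  IsSepOn G Zᶜ (A \ Z) (B \ Z)

/-- `G` is `k`-connected: more than `k` vertices, and deleting fewer than `k`
vertices leaves a connected graph. -/
def KConnected {V : Type*} (k : ℕ) (G : SimpleGraph V) : Prop :=
  k < (Set.univ : Set V).ncard ∧
    ∀ X : Set V, X.ncard < k → (G.induce Xᶜ).Connected

/-- The graph `G / vw` obtained from `G` by contracting the edge `vw`:
the vertex `w` is removed and identified with `v`. -/
def contract {V : Type*} (G : SimpleGraph V) (v w : V) :
    SimpleGraph {x : V // x ≠ w} where
  Adj x y := x ≠ y ∧
    (G.Adj x y ∨ ((x : V) = v ∧ G.Adj w y) ∨ ((y : V) = v ∧ G.Adj w x))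
  symm := by
    constructor
    rintro x y ⟨hxy, h⟩
    refine ⟨hxy.symm, ?_⟩
    rcases h with h | ⟨h1, h2⟩ | ⟨h1, h2⟩
    · exact Or.inl h.symm
    · exact Or.inr (Or.inr ⟨h1, h2⟩)
    · exact Or.inr (Or.inl ⟨h1, h2⟩)
  loopless := by constructor; rintro x ⟨h, -⟩; exact h rfl

/-- The graph obtained from `G` by contracting the set `F` of edges:
its vertices are the connected components of the spanning subgraph with
edge set `F`, with components adjacent if `G` has an edge between them. -/
def contractEdges {V : Type*} (G : SimpleGraph V) (F : Set (Sym2 V)) :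
    SimpleGraph (SimpleGraph.fromEdgeSet F).ConnectedComponent where
  Adj c d := c ≠ d ∧ ∃ x y, G.Adj x y ∧
    (SimpleGraph.fromEdgeSet F).connectedComponentMk x = c ∧
    (SimpleGraph.fromEdgeSet F).connectedComponentMk y = d
  symm := by
    constructor
    rintro c d ⟨hcd, x, y, hxy, hx, hy⟩
    exact ⟨hcd.symm, y, x, hxy.symm, hy, hx⟩
  loopless := by constructor; rintro c ⟨h, -⟩; exact h rfl

/-- `G` has a `K_t`-minor: there are `t` pairwise disjoint nonempty connected
vertex sets (branch sets) with an edge between each pair. -/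
def HasCliqueMinor {V : Type*} (G : SimpleGraph V) (t : ℕ) : Prop :=
  ∃ f : Fin t → Set V,
    (∀ i, (G.induce (f i)).Connected) ∧
    (∀ i j, i ≠ j → Disjoint (f i) (f j)) ∧
    (∀ i j, i ≠ j → ∃ a ∈ f i, ∃ b ∈ f j, G.Adj a b)

/-! The corner `{A ∩ C, B ∪ D}` of the two separations is a separation whose fragments contain
`A' ∩ C'` and `B'`, so it is `Z`-good and therefore has order at least `k`. Its separator is
`(S ∩ C) ∪ (T ∩ A')`, while `|S| = |S ∩ C| + |S ∩ D'|` and `|T| = |T ∩ A'| + |S ∩ T| + |T ∩ B'|`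
are at most `k`; comparing these counts gives both inequalities. -/

theorem Set.ncard_inter_inter_add_ncard_inter_sdiff {α : Type*} [Finite α] (s t u : Set α) :
    (s ∩ (u ∩ t)).ncard + (s ∩ (u \ t)).ncard = (s ∩ u).ncard := by
  rw [← Set.inter_assoc, ← Set.inter_sdiff_assoc, Set.ncard_inter_add_ncard_sdiff_eq_ncard]

namespace IsSeparation

variable {V : Type*} {G : SimpleGraph V} {A B C D : Set V}

theorem symm (h : IsSeparation G A B) : IsSeparation G B A :=
  ⟨Set.union_comm A B ▸ h.1, fun b hb a ha hab => h.2.1 a ha b hb hab.symm, h.2.2.2, h.2.2.1⟩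

theorem mem_of_notMem (h : IsSeparation G A B) {x : V} (hx : x ∉ A) : x ∈ B :=
  Set.compl_subset_iff_union.2 h.1 hx

theorem sdiff_eq_compl (h : IsSeparation G A B) : B \ A = Aᶜ :=
  Set.Subset.antisymm (fun _ hx => hx.2) (fun _ hx => ⟨h.mem_of_notMem hx, hx⟩)

theorem ncard_inter_add_ncard_inter_sdiff [Finite V] (h : IsSeparation G A B) (s : Set V) :
    (s ∩ A).ncard + (s ∩ (B \ A)).ncard = s.ncard := by
  rw [h.sdiff_eq_compl, ← Set.sdiff_eq, Set.ncard_inter_add_ncard_sdiff_eq_ncard]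

theorem inter_union (hAB : IsSeparation G A B) (hCD : IsSeparation G C D)
    (hne : ((A \ B) ∩ (C \ D)).Nonempty) : IsSeparation G (A ∩ C) (B ∪ D) := by
  refine ⟨?_, ?_, ?_, ?_⟩
  · refine Set.eq_univ_of_forall fun x => ?_
    by_cases hxA : x ∈ A
    · by_cases hxC : x ∈ C
      · exact Or.inl ⟨hxA, hxC⟩
      · exact Or.inr (Or.inr (hCD.mem_of_notMem hxC))
    · exact Or.inr (Or.inl (hAB.mem_of_notMem hxA))
  · rintro a ⟨⟨haA, haC⟩, haBD⟩ b ⟨hbBD, hbAC⟩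
    rw [Set.mem_union, not_or] at haBD
    by_cases hbA : b ∈ A
    · have hbC : b ∉ C := fun hbC => hbAC ⟨hbA, hbC⟩
      exact hCD.2.1 a ⟨haC, haBD.2⟩ b ⟨hCD.mem_of_notMem hbC, hbC⟩
    · exact hAB.2.1 a ⟨haA, haBD.1⟩ b ⟨hAB.mem_of_notMem hbA, hbA⟩
  · obtain ⟨x, ⟨hxA, hxB⟩, hxC, hxD⟩ := hne
    exact ⟨x, ⟨hxA, hxC⟩, by simp [hxB, hxD]⟩
  · obtain ⟨x, hxB, hxA⟩ := hAB.2.2.2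
    exact ⟨x, Or.inl hxB, fun hx => hxA hx.1⟩

theorem le_ncard_inter_of_not_subset {k : ℕ} {Z : Set V}
    (hbad : ∀ A B : Set V, IsSeparation G A B → (A ∩ B).ncard ≤ k - 1 →
      (A \ B ⊆ Z ∨ B \ A ⊆ Z))
    (h : IsSeparation G A B) (hA : ¬ A \ B ⊆ Z) (hB : ¬ B \ A ⊆ Z) : k ≤ (A ∩ B).ncard :=
  not_lt.1 fun hlt => (hbad A B h (by omega)).elim hA hB

theorem ncard_inter_union_inter [Finite V] (hAB : IsSeparation G A B) :
    ((A ∩ C) ∩ (B ∪ D)).ncard = ((A ∩ B) ∩ C).ncard + ((C ∩ D) ∩ (A \ B)).ncard := by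
  rw [← hAB.symm.ncard_inter_add_ncard_inter_sdiff ((A ∩ C) ∩ (B ∪ D))]
  congr 2 <;> ext x <;> simp only [Set.mem_inter_iff, Set.mem_union, Set.mem_sdiff] <;> tauto

end IsSeparation

theorem stmt5_general {V : Type*} [Fintype V] (G : SimpleGraph V) (k : ℕ)
    (Z : Set V)
    (hbad : ∀ A B : Set V, IsSeparation G A B → (A ∩ B).ncard ≤ k - 1 →
      (A \ B ⊆ Z ∨ B \ A ⊆ Z))
    (A B C D : Set V)
    (hAB : IsSeparation G A B) (hABk : (A ∩ B).ncard ≤ k)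
    (hCD : IsSeparation G C D) (hCDk : (C ∩ D).ncard ≤ k)
    (h1 : ¬ (A \ B) ∩ (C \ D) ⊆ Z) (h2 : ¬ (B \ A) ⊆ Z) :
    ((A ∩ B) ∩ (D \ C)).ncard ≤ ((C ∩ D) ∩ (A \ B)).ncard ∧
      ((C ∩ D) ∩ (B \ A)).ncard ≤ ((A ∩ B) ∩ (C \ D)).ncard := by
  have hcorner := hAB.inter_union hCD ((Set.nonempty_of_not_subset h1).mono Set.sdiff_subset)
  have hfragA : (A ∩ C) \ (B ∪ D) = (A \ B) ∩ (C \ D) := by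
    ext x; simp only [Set.mem_sdiff, Set.mem_inter_iff, Set.mem_union]; tauto
  have hfragB : B \ A ⊆ (B ∪ D) \ (A ∩ C) := fun x hx => ⟨Or.inl hx.1, fun hx' => hx.2 hx'.1⟩
  have hk : k ≤ ((A ∩ C) ∩ (B ∪ D)).ncard :=
    hcorner.le_ncard_inter_of_not_subset hbad (hfragA ▸ h1) fun h => h2 (hfragB.trans h)
  have hX := hAB.ncard_inter_union_inter (C := C) (D := D)
  have hS := hCD.ncard_inter_add_ncard_inter_sdiff (A ∩ B)
  have hT := hAB.ncard_inter_add_ncard_inter_sdiff (C ∩ D)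
  have hSC := Set.ncard_inter_inter_add_ncard_inter_sdiff (A ∩ B) D C
  have hTA := Set.ncard_inter_inter_add_ncard_inter_sdiff (C ∩ D) B A
  rw [Set.inter_comm (C ∩ D)] at hTA
  omega

/-- If every `(k−1)`-separation of `G` is `Z`-bad, and `{A,B}`, `{C,D}` are
`k`-separations with `A' ∩ C' ⊄ Z` and `B' ⊄ Z`, then `|T ∩ A'| ≥ |S ∩ D'|`
and `|S ∩ C'| ≥ |T ∩ B'|`. -/
theorem stmt5 {V : Type*} [Fintype V] (G : SimpleGraph V) (k : ℕ) (hk : 0 < k)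
    (Z : Set V)
    (hbad : ∀ A B : Set V, IsSeparation G A B → (A ∩ B).ncard ≤ k - 1 →
      (A \ B ⊆ Z ∨ B \ A ⊆ Z))
    (A B C D : Set V)
    (hAB : IsSeparation G A B) (hABk : (A ∩ B).ncard ≤ k)
    (hCD : IsSeparation G C D) (hCDk : (C ∩ D).ncard ≤ k)
    (h1 : ¬ (A \ B) ∩ (C \ D) ⊆ Z) (h2 : ¬ (B \ A) ⊆ Z) :
    ((A ∩ B) ∩ (D \ C)).ncard ≤ ((C ∩ D) ∩ (A \ B)).ncard ∧
      ((C ∩ D) ∩ (B \ A)).ncard ≤ ((A ∩ B) ∩ (C \ D)).ncard :=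
  stmt5_general G k Z hbad A B C D hAB hABk hCD hCDk h1 h2
end

section
/- Assume that for each positive integer t there exists N_t such that every (t+1)-connected graph with at least N_t vertices has a K_t-minor. Then for each positive integer t there exists M_t such that every graph G with no K_t-minor admits a partition of its vertex set into at most ⌈(7t−3)/2⌉ parts such that every connected component of the subgraph induced by each part has at most M_t vertices. -/
/-!
Van den Heuvel and Wood's argument gives a colouring with `2(t - 1) ≤ ⌈(7t - 3)/2⌉` colours
whose monochromatic components have at most `t - 1` vertices. Vertices are processed greedily
into connected parts, keeping the invariant that the parts touching a connected set `D` of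
unprocessed vertices pairwise touch; together with `D` they would form a clique minor, so at
most `t - 2` of them exist. A component `C` of the unprocessed vertices becomes a new part made
of geodesics in `C` from a root to a neighbour of each part touching `C`: it touches all of them,
which preserves the invariant, and one of `t - 1` colours is free for it. Inside the part, a
vertex's second colour is the parity of its distance to the root, so a monochromatic connected
set lies in one distance layer, which meets each geodesic at most once.
-/

open SimpleGraph

namespace SimpleGraph

variable {V : Type*} {G : SimpleGraph V}

def Touches (G : SimpleGraph V) (A B : Set V) : Prop :=
  ∃ a ∈ A, ∃ b ∈ B, G.Adj a b

theorem Touches.symm {A B : Set V} (h : G.Touches A B) : G.Touches B A := by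
  obtain ⟨a, ha, b, hb, hab⟩ := h
  exact ⟨b, hb, a, ha, hab.symm⟩

theorem Touches.mono {A A' B B' : Set V} (hA : A ⊆ A') (hB : B ⊆ B') (h : G.Touches A B) :
    G.Touches A' B' := by
  obtain ⟨a, ha, b, hb, hab⟩ := h
  exact ⟨a, hA ha, b, hB hb, hab⟩

def ClusteredOn {α : Type*} (G : SimpleGraph V) (f : V → α) (U : Set V) (m : ℕ) : Prop :=
  ∀ T ⊆ U, (G.induce T).Connected → (∀ y ∈ T, ∀ z ∈ T, f y = f z) → T.ncard ≤ m

theorem ClusteredOn.of_eq_imp_eq {α β : Type*} {f : V → α} {g : V → β} {U : Set V} {m : ℕ}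
    (h : G.ClusteredOn g U m) (hfg : ∀ y ∈ U, ∀ z ∈ U, f y = f z → g y = g z) :
    G.ClusteredOn f U m :=
  fun T hTU hT hf => h T hTU hT fun y hy z hz => hfg y (hTU hy) z (hTU hz) (hf y hy z hz)

theorem ClusteredOn.mono {α : Type*} {f : V → α} {U : Set V} {m m' : ℕ}
    (h : G.ClusteredOn f U m) (hm : m ≤ m') : G.ClusteredOn f U m' :=
  fun T hTU hT hf => (h T hTU hT hf).trans hm

theorem induce_singleton_connected (v : V) : (G.induce {v}).Connected :=
  ⟨Preconnected.of_subsingleton⟩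

theorem eq_of_induce_preconnected {β : Type*} {T : Set V} (hT : (G.induce T).Preconnected)
    {g : V → β} (hg : ∀ u ∈ T, ∀ v ∈ T, G.Adj u v → g u = g v) {u v : V} (hu : u ∈ T)
    (hv : v ∈ T) : g u = g v := by
  suffices ∀ a b : T, (G.induce T).Walk a b → g a = g b from (hT ⟨u, hu⟩ ⟨v, hv⟩).elim (this _ _)
  intro a b p
  induction p with
  | nil => rfl
  | cons h _ ih => exact (hg _ (Subtype.prop _) _ (Subtype.prop _) h).trans ih

theorem induce_image_supp_connected {W : Set V} (K : (G.induce W).ConnectedComponent) :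
    (G.induce (Subtype.val '' K.supp)).Connected := by
  refine K.connected_toSimpleGraph.map
    { toFun := fun v => ⟨v.1.1, v.1, v.2, rfl⟩, map_rel' := fun h => h } ?_
  rintro ⟨_, v, hv, rfl⟩
  exact ⟨⟨v, hv⟩, rfl⟩

theorem ClusteredOn.ncard_supp_le {α : Type*} {f : V → α} {m : ℕ}
    (h : G.ClusteredOn f Set.univ m) (x : V) :
    ((G.induce {y | f y = f x}).connectedComponentMk ⟨x, rfl⟩).supp.ncard ≤ m := by
  rw [← Set.ncard_image_of_injective _ Subtype.val_injective]
  refine h _ (Set.subset_univ _) (induce_image_supp_connected _) ?_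
  rintro _ ⟨⟨y, hy⟩, -, rfl⟩ _ ⟨⟨z, hz⟩, -, rfl⟩
  exact hy.trans hz.symm

theorem exists_connected_closed_under_touches [Finite V] {S : Set V} {x : V} (hx : x ∈ S) :
    ∃ C ⊆ S, x ∈ C ∧ (G.induce C).Connected ∧
      ∀ D ⊆ S, (G.induce D).Connected → G.Touches C D → D ⊆ C := by
  obtain ⟨C, -, ⟨hCS, hxC, hC⟩, hmax⟩ :=
    Finite.exists_le_maximal (p := fun C : Set V => C ⊆ S ∧ x ∈ C ∧ (G.induce C).Connected)
      ⟨Set.singleton_subset_iff.mpr hx, rfl, induce_singleton_connected x⟩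
  refine ⟨C, hCS, hxC, hC, fun D hDS hD ⟨a, ha, b, hb, hab⟩ => ?_⟩
  have hCD : (G.induce (C ∪ D)).Connected :=
    connected_induce_union hC.preconnected hD.preconnected ha hb hab
  exact Set.union_subset_iff.mp
    (hmax ⟨Set.union_subset hCS hDS, Or.inl hxC, hCD⟩ Set.subset_union_left) |>.2

theorem Connected.exists_adj_dist_add_one_eq {W : Type*} {H : SimpleGraph W} (hH : H.Connected)
    {r v : W} (hv : v ≠ r) : ∃ u, H.Adj u v ∧ H.dist r u + 1 = H.dist r v := by
  obtain ⟨p, hp⟩ := hH.exists_walk_length_eq_dist v r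
  cases p with
  | nil => exact absurd rfl hv
  | @cons _ u _ h q =>
    refine ⟨u, h.symm, ?_⟩
    have hq : H.dist u r ≤ q.length := dist_le q
    have hvu : H.dist v r ≤ H.dist v u + H.dist u r := hH.dist_triangle
    rw [dist_eq_one_iff_adj.mpr h] at hvu
    rw [Walk.length_cons] at hp
    rw [dist_comm (u := r), dist_comm (u := r)]
    omega

theorem exists_bfs_level {C : Set V} (hC : (G.induce C).Connected) {r : V} (hr : r ∈ C) :
    ∃ ℓ : V → ℕ, (∀ u ∈ C, ∀ v ∈ C, G.Adj u v → ℓ v ≤ ℓ u + 1) ∧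
      ∀ v ∈ C, v ≠ r → ∃ u ∈ C, G.Adj u v ∧ ℓ u + 1 = ℓ v := by
  classical
  set ℓ : V → ℕ := fun v => if hv : v ∈ C then (G.induce C).dist ⟨r, hr⟩ ⟨v, hv⟩ else 0
  have hℓ : ∀ v (hv : v ∈ C), ℓ v = (G.induce C).dist ⟨r, hr⟩ ⟨v, hv⟩ := fun v hv => dif_pos hv
  refine ⟨ℓ, fun u hu v hv huv => ?_, fun v hv hvr => ?_⟩
  · have h := hC.dist_triangle (u := ⟨r, hr⟩) (v := ⟨u, hu⟩) (w := ⟨v, hv⟩)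
    rw [dist_eq_one_iff_adj.mpr (show (G.induce C).Adj ⟨u, hu⟩ ⟨v, hv⟩ from huv)] at h
    rwa [hℓ u hu, hℓ v hv]
  · obtain ⟨⟨u, hu⟩, huv, hdist⟩ :=
      hC.exists_adj_dist_add_one_eq (r := ⟨r, hr⟩) (v := ⟨v, hv⟩) (by simpa using hvr)
    exact ⟨u, hu, huv, by rwa [hℓ u hu, hℓ v hv]⟩

theorem exists_geodesic_set {C : Set V} {r : V} (hr : r ∈ C) {ℓ : V → ℕ}
    (hdesc : ∀ v ∈ C, v ≠ r → ∃ u ∈ C, G.Adj u v ∧ ℓ u + 1 = ℓ v) {b : V} (hb : b ∈ C) :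
    ∃ Q ⊆ C, b ∈ Q ∧ r ∈ Q ∧ (G.induce Q).Connected ∧ Set.InjOn ℓ Q := by
  suffices ∀ n, ∀ b ∈ C, ℓ b = n →
      ∃ Q ⊆ C, b ∈ Q ∧ r ∈ Q ∧ (G.induce Q).Connected ∧ Set.InjOn ℓ Q ∧ ∀ v ∈ Q, ℓ v ≤ n by
    obtain ⟨Q, hQC, hbQ, hrQ, hQ, hinj, -⟩ := this _ b hb rfl
    exact ⟨Q, hQC, hbQ, hrQ, hQ, hinj⟩
  intro n
  induction n using Nat.strong_induction_on with
  | _ n ih =>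
  intro b hb hbn
  by_cases hbr : b = r
  · subst hbr
    exact ⟨{b}, Set.singleton_subset_iff.mpr hb, rfl, rfl, induce_singleton_connected b,
      Set.injOn_singleton _ _, fun v hv => hv ▸ hbn.le⟩
  obtain ⟨u, hu, hub, hℓu⟩ := hdesc b hb hbr
  obtain ⟨Q, hQC, huQ, hrQ, hQ, hinj, hle⟩ := ih (ℓ u) (by omega) u hu rfl
  have hbQ : ∀ v ∈ Q, ℓ v < ℓ b := fun v hv => by have := hle v hv; omega
  refine ⟨insert b Q, Set.insert_subset hb hQC, Set.mem_insert b Q, Set.mem_insert_of_mem b hrQ,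
    ?_, ?_, ?_⟩
  · rw [← Set.singleton_union]
    exact connected_induce_union (induce_singleton_connected b).preconnected hQ.preconnected
      rfl huQ hub.symm
  · rw [Set.injOn_insert fun h => (hbQ b h).false]
    exact ⟨hinj, fun ⟨v, hv, hvb⟩ => (hbQ v hv).ne hvb⟩
  · rintro v (rfl | hv)
    · exact hbn.le
    · have := hbQ v hv; omega

theorem ncard_le_of_subset_biUnion_of_injOn {ι : Type*} {I : Set ι} (hI : I.Finite)
    {Q : ι → Set V} {ℓ : V → ℕ} (hQ : ∀ i ∈ I, Set.InjOn ℓ (Q i)) {T : Set V}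
    (hT : T ⊆ ⋃ i ∈ I, Q i) (hℓ : ∀ y ∈ T, ∀ z ∈ T, ℓ y = ℓ z) : T.ncard ≤ I.ncard := by
  have hidx : ∀ y ∈ T, ∃ i ∈ I, y ∈ Q i := fun y hy => by simpa using hT hy
  rcases T.eq_empty_or_nonempty with rfl | ⟨y, hy⟩
  · simp
  have : Nonempty ι := let ⟨i, _⟩ := hidx y hy; ⟨i⟩
  choose! idx hidxI hidxQ using hidx
  refine Set.ncard_le_ncard_of_injOn idx hidxI (fun y hy z hz hyz => ?_) hI
  exact hQ _ (hidxI y hy) (hidxQ y hy) (hyz ▸ hidxQ z hz) (hℓ y hy z hz)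

theorem exists_connected_superset_clusteredOn {C : Set V} (hC : (G.induce C).Connected)
    {r : V} (hr : r ∈ C) {B : Set V} (hBC : B ⊆ C) (hB : B.Finite) :
    ∃ R ⊆ C, r ∈ R ∧ B ⊆ R ∧ (G.induce R).Connected ∧
      ∃ layer : V → Fin 2, G.ClusteredOn layer R (B.ncard + 1) := by
  obtain ⟨ℓ, hadj, hdesc⟩ := exists_bfs_level hC hr
  have hgeod := fun b (hb : b ∈ C) => exists_geodesic_set hr hdesc hb
  choose! Q hQC hbQ hrQ hQ hinj using hgeod
  have hI : insert r B ⊆ C := Set.insert_subset hr hBC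
  refine ⟨⋃ b ∈ insert r B, Q b, Set.iUnion₂_subset fun b hb => hQC b (hI hb),
    Set.mem_biUnion (Set.mem_insert r B) (hrQ r hr),
    fun b hb => Set.mem_biUnion (Set.mem_insert_of_mem r hb) (hbQ b (hBC hb)), ?_,
    fun v => Fin.ofNat 2 (ℓ v), ?_⟩
  · refine induce_connected_of_patches r (Set.mem_biUnion (Set.mem_insert r B) (hrQ r hr))
      fun {v} hv => ?_
    obtain ⟨b, hb, hvb⟩ := Set.mem_iUnion₂.mp hv
    exact ⟨Q b, Set.subset_biUnion_of_mem hb, hrQ b (hI hb), hvb,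
      (hQ b (hI hb)).preconnected _ _⟩
  · intro T hTR hT hpar
    have hTC : T ⊆ C := hTR.trans (Set.iUnion₂_subset fun b hb => hQC b (hI hb))
    have hlevel : ∀ y ∈ T, ∀ z ∈ T, ℓ y = ℓ z := fun y hy z hz =>
      eq_of_induce_preconnected hT.preconnected (fun u hu v hv huv => by
        have h1 := hadj u (hTC hu) v (hTC hv) huv
        have h2 := hadj v (hTC hv) u (hTC hu) huv.symm
        have h3 := congrArg Fin.val (hpar u hu v hv)
        simp only [Fin.val_ofNat] at h3
        omega) hy hz
    calc T.ncard ≤ (insert r B).ncard :=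
          ncard_le_of_subset_biUnion_of_injOn (hB.insert r)
            (fun b hb => hinj b (hI hb)) hTR hlevel
      _ ≤ B.ncard + 1 := Set.ncard_insert_le r B

end SimpleGraph

section CliqueMinor

variable {V : Type*} {G : SimpleGraph V}

theorem hasCliqueMinor_of_le_ncard {t : ℕ} {𝒬 : Set (Set V)} (hfin : 𝒬.Finite)
    (ht : t ≤ 𝒬.ncard) (hconn : ∀ A ∈ 𝒬, (G.induce A).Connected)
    (hdisj : 𝒬.PairwiseDisjoint id) (htouch : 𝒬.Pairwise G.Touches) : HasCliqueMinor G t := by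
  obtain ⟨𝒬', h𝒬', hcard⟩ := Set.exists_subset_card_eq ht
  have : Finite 𝒬' := (hfin.subset h𝒬').to_subtype
  let e := (Finite.equivFinOfCardEq (Nat.card_coe_set_eq 𝒬' ▸ hcard)).symm
  have hne : ∀ i j, i ≠ j → (e i : Set V) ≠ e j := fun i j hij h =>
    hij (e.injective (Subtype.ext h))
  refine ⟨fun i => e i, fun i => hconn _ (h𝒬' (e i).2), fun i j hij => ?_, fun i j hij => ?_⟩
  · exact hdisj (h𝒬' (e i).2) (h𝒬' (e j).2) (hne i j hij)
  · exact htouch (h𝒬' (e i).2) (h𝒬' (e j).2) (hne i j hij)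

theorem hasCliqueMinor_one [Nonempty V] : HasCliqueMinor G 1 := by
  obtain ⟨v⟩ := ‹Nonempty V›
  refine hasCliqueMinor_of_le_ncard (𝒬 := {{v}}) (Set.finite_singleton _) (by simp) ?_
    (Set.pairwiseDisjoint_singleton _ _) (Set.pairwise_singleton _ _)
  rintro _ rfl
  exact induce_singleton_connected v

end CliqueMinor

theorem exists_forall_ne_of_ncard_lt {V α : Type*} [Finite α] {A : Set (Set V)} {g : V → α}
    (hAfin : A.Finite) (hA : A.ncard < Nat.card α) (hg : ∀ p ∈ A, ∀ x ∈ p, ∀ y ∈ p, g x = g y) :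
    ∃ a, ∀ p ∈ A, ∀ y ∈ p, g y ≠ a := by
  by_contra! h
  choose p hpA y hyp hy using h
  have hinj : Function.Injective fun a => (⟨p a, hpA a⟩ : A) := fun a b hab => by
    have hpab : p a = p b := congrArg Subtype.val hab
    rw [← hy a, ← hy b, hg _ (hpA a) _ (hyp a) _ (hpab ▸ hyp b)]
  have : Finite A := hAfin.to_subtype
  exact (Nat.card_le_card_of_injective _ hinj).not_gt hA

/-- A stage of the greedy construction: the vertices outside `S` have been processed into
`parts`, which are coloured by the first coordinate of `color`. -/
structure PartialColoring {V : Type*} (G : SimpleGraph V) (t : ℕ) (S : Set V) where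
  color : V → Fin (t - 1) × Fin 2
  parts : Set (Set V)
  sUnion_parts : ⋃₀ parts = Sᶜ
  connected : ∀ p ∈ parts, (G.induce p).Connected
  pairwiseDisjoint : parts.PairwiseDisjoint id
  fst_eq : ∀ p ∈ parts, ∀ x ∈ p, ∀ y ∈ p, (color x).1 = (color y).1
  fst_ne : ∀ p ∈ parts, ∀ q ∈ parts, p ≠ q → G.Touches p q →
    ∀ x ∈ p, ∀ y ∈ q, (color x).1 ≠ (color y).1
  clusteredOn : ∀ p ∈ parts, G.ClusteredOn color p (t - 1)
  pairwise_touches : ∀ D ⊆ S, (G.induce D).Connected →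
    {p ∈ parts | G.Touches p D}.Pairwise G.Touches

namespace PartialColoring

variable {V : Type*} {G : SimpleGraph V} {t : ℕ} {S : Set V}

theorem subset_compl (c : PartialColoring G t S) {p : Set V} (hp : p ∈ c.parts) : p ⊆ Sᶜ :=
  c.sUnion_parts ▸ Set.subset_sUnion_of_mem hp

theorem ncard_touches_le [Finite V] (hG : ¬ HasCliqueMinor G t) (c : PartialColoring G t S)
    {D : Set V} (hDS : D ⊆ S) (hD : (G.induce D).Connected) :
    {p ∈ c.parts | G.Touches p D}.ncard ≤ t - 2 := by
  set A := {p ∈ c.parts | G.Touches p D}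
  have hDA : D ∉ A := fun h => by
    obtain ⟨x, hx⟩ := hD.nonempty
    exact c.subset_compl h.1 hx (hDS hx)
  by_contra! hlt
  refine hG (hasCliqueMinor_of_le_ncard (𝒬 := insert D A) (Set.toFinite _)
    (by rw [Set.ncard_insert_of_notMem hDA]; omega) ?_ ?_ ?_)
  · rintro p (rfl | hp)
    exacts [hD, c.connected p hp.1]
  · refine (c.pairwiseDisjoint.subset fun p hp => hp.1).insert fun p hp _ => ?_
    exact Set.disjoint_left.mpr fun x hxD hxp => c.subset_compl hp.1 hxp (hDS hxD)
  · exact (c.pairwise_touches D hDS hD).insert fun p hp _ => ⟨hp.2.symm, hp.2⟩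

open Classical in
noncomputable def insertPart (c : PartialColoring G t S) {R : Set V} (hRS : R ⊆ S)
    (hR : (G.induce R).Connected) {a : Fin (t - 1)}
    (ha : ∀ p ∈ c.parts, G.Touches p R → ∀ y ∈ p, (c.color y).1 ≠ a) {layer : V → Fin 2}
    (hlayer : G.ClusteredOn layer R (t - 1))
    (htouch : ∀ D ⊆ S \ R, (G.induce D).Connected →
      {p ∈ insert R c.parts | G.Touches p D}.Pairwise G.Touches) :
    PartialColoring G t (S \ R) :=
  have hold : ∀ p ∈ c.parts, ∀ y ∈ p, R.piecewise (fun v => (a, layer v)) c.color y = c.color y :=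
    fun p hp y hy => Set.piecewise_eq_of_notMem _ _ _ fun hyR => c.subset_compl hp hy (hRS hyR)
  have hnew : ∀ y ∈ R, R.piecewise (fun v => (a, layer v)) c.color y = (a, layer y) :=
    fun y hy => Set.piecewise_eq_of_mem _ _ _ hy
  { color := R.piecewise (fun v => (a, layer v)) c.color
    parts := insert R c.parts
    sUnion_parts := by
      rw [Set.sUnion_insert, c.sUnion_parts, Set.compl_sdiff, Set.union_comm]
    connected := by
      rintro p (rfl | hp)
      exacts [hR, c.connected p hp]
    pairwiseDisjoint := c.pairwiseDisjoint.insert fun p hp _ =>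
      Set.disjoint_left.mpr fun x hxR hxp => c.subset_compl hp hxp (hRS hxR)
    fst_eq := by
      rintro p (rfl | hp) x hx y hy
      · rw [hnew x hx, hnew y hy]
      · rw [hold p hp x hx, hold p hp y hy]
        exact c.fst_eq p hp x hx y hy
    fst_ne := by
      rintro p (rfl | hp) q (rfl | hq) hpq hpq' x hx y hy
      · exact absurd rfl hpq
      · rw [hnew x hx, hold q hq y hy]
        exact (ha q hq hpq'.symm y hy).symm
      · rw [hold p hp x hx, hnew y hy]
        exact ha p hp hpq' x hx
      · rw [hold p hp x hx, hold q hq y hy]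
        exact c.fst_ne p hp q hq hpq hpq' x hx y hy
    clusteredOn := by
      rintro p (rfl | hp)
      · refine hlayer.of_eq_imp_eq fun y hy z hz hyz => ?_
        rw [hnew y hy, hnew z hz] at hyz
        exact congrArg Prod.snd hyz
      · refine (c.clusteredOn p hp).of_eq_imp_eq fun y hy z hz hyz => ?_
        rwa [hold p hp y hy, hold p hp z hz] at hyz
    pairwise_touches := htouch }

theorem exists_ssubset [Finite V] (hG : ¬ HasCliqueMinor G t) (c : PartialColoring G t S)
    (hS : S.Nonempty) : ∃ S' ⊂ S, Nonempty (PartialColoring G t S') := by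
  obtain ⟨x, hx⟩ := hS
  have ht : 2 ≤ t := by have := (c.color x).1.isLt; omega
  obtain ⟨C, hCS, hxC, hC, hclosed⟩ := exists_connected_closed_under_touches (G := G) hx
  set A := {p ∈ c.parts | G.Touches p C}
  have hAcard : A.ncard ≤ t - 2 := c.ncard_touches_le hG hCS hC
  have hb : ∀ p ∈ A, ∃ v, v ∈ C ∧ ∃ y ∈ p, G.Adj y v := fun p hp =>
    let ⟨y, hy, v, hv, hyv⟩ := hp.2; ⟨v, hv, y, hy, hyv⟩
  have : Nonempty V := ⟨x⟩
  choose! b hbC hbp using hb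
  obtain ⟨R, hRC, hxR, hbR, hR, layer, hlayer⟩ := exists_connected_superset_clusteredOn hC hxC
    (Set.image_subset_iff.mpr hbC) (Set.toFinite (b '' A))
  have hAR : ∀ p ∈ A, G.Touches R p := fun p hp =>
    let ⟨y, hy, hyb⟩ := hbp p hp; ⟨b p, hbR ⟨p, hp, rfl⟩, y, hy, hyb.symm⟩
  obtain ⟨a, ha⟩ := exists_forall_ne_of_ncard_lt (g := fun y => (c.color y).1) (Set.toFinite A)
    (by rw [Nat.card_eq_fintype_card, Fintype.card_fin]; omega)
    fun p hp => c.fst_eq p hp.1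
  refine ⟨S \ R, Set.sdiff_ssubset_left_iff.mpr ⟨x, hx, hxR⟩, ⟨c.insertPart (hRC.trans hCS) hR
    (fun p hp hpR => ha p ⟨hp, hpR.mono le_rfl hRC⟩) (hlayer.mono ?_) ?_⟩⟩
  · have := Set.ncard_image_le (f := b) (Set.toFinite A); omega
  intro D hD hDconn
  by_cases hDC : D ⊆ C
  · refine (Set.pairwise_insert.mpr ⟨c.pairwise_touches C hCS hC, fun p hp _ =>
      ⟨hAR p hp, (hAR p hp).symm⟩⟩).mono ?_
    rintro p ⟨rfl | hp, hpD⟩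
    exacts [Set.mem_insert _ _, Set.mem_insert_of_mem _ ⟨hp, hpD.mono le_rfl hDC⟩]
  · refine (c.pairwise_touches D (hD.trans Set.sdiff_subset) hDconn).mono ?_
    rintro p ⟨rfl | hp, hpD⟩
    · exact absurd (hclosed D (hD.trans Set.sdiff_subset) hDconn (hpD.mono hRC le_rfl)) hDC
    · exact ⟨hp, hpD⟩

theorem nonempty_empty [Finite V] (hG : ¬ HasCliqueMinor G t) (S : Set V)
    (hS : Nonempty (PartialColoring G t S)) : Nonempty (PartialColoring G t ∅) := by
  induction S using WellFoundedLT.induction with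
  | _ S ih =>
  obtain ⟨c⟩ := hS
  rcases S.eq_empty_or_nonempty with rfl | hS
  · exact ⟨c⟩
  · obtain ⟨S', hS', hc'⟩ := c.exists_ssubset hG hS
    exact ih S' hS' hc'

def univ (G : SimpleGraph V) (ht : 2 ≤ t) : PartialColoring G t Set.univ where
  color _ := (⟨0, by omega⟩, 0)
  parts := ∅
  sUnion_parts := by simp
  connected := by simp
  pairwiseDisjoint := Set.pairwiseDisjoint_empty
  fst_eq := by simp
  fst_ne := by simp
  clusteredOn := by simp
  pairwise_touches _ _ _ := by simp

theorem eq_of_adj (c : PartialColoring G t S) {p q : Set V} (hp : p ∈ c.parts)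
    (hq : q ∈ c.parts) {x y : V} (hx : x ∈ p) (hy : y ∈ q) (hxy : G.Adj x y)
    (hcol : c.color x = c.color y) : p = q := by
  by_contra hpq
  exact c.fst_ne p hp q hq hpq ⟨x, hx, y, hy, hxy⟩ x hx y hy (congrArg Prod.fst hcol)

/-- A connected monochromatic set stays inside one part, since touching parts get different
colours. -/
theorem clusteredOn_univ (c : PartialColoring G t ∅) : G.ClusteredOn c.color Set.univ (t - 1) := by
  have hcover : ∀ v, ∃ p ∈ c.parts, v ∈ p := fun v => by
    simp [← Set.mem_sUnion, c.sUnion_parts]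
  choose part hpart hmem using hcover
  intro T _ hT hmono
  obtain ⟨x, hx⟩ := hT.nonempty
  have hTx : T ⊆ part x := fun y hy =>
    eq_of_induce_preconnected (g := part) hT.preconnected
      (fun u hu v hv huv => c.eq_of_adj (hpart u) (hpart v) (hmem u) (hmem v) huv
        (hmono u hu v hv)) hy hx ▸ hmem y
  exact c.clusteredOn _ (hpart x) T hTx hT hmono

end PartialColoring

theorem exists_clusteredOn_univ {V : Type*} [Finite V] {G : SimpleGraph V} {t : ℕ} (ht : 2 ≤ t)
    (hG : ¬ HasCliqueMinor G t) :
    ∃ f : V → Fin (t - 1) × Fin 2, G.ClusteredOn f Set.univ (t - 1) :=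
  let ⟨c⟩ := PartialColoring.nonempty_empty hG _ ⟨PartialColoring.univ G ht⟩
  ⟨c.color, c.clusteredOn_univ⟩

theorem stmt11_general :
    ∀ t : ℕ, 0 < t → ∃ M : ℕ,
      ∀ (V : Type) (_ : Fintype V) (G : SimpleGraph V),
        ¬ HasCliqueMinor G t →
          ∃ f : V → Fin ((7 * t - 2) / 2),
            ∀ x : V,
              (((G.induce {y | f y = f x}).connectedComponentMk
                  ⟨x, rfl⟩).supp).ncard ≤ M := by
  intro t ht
  refine ⟨t - 1, fun V _ G hG => ?_⟩
  obtain rfl | ht2 : t = 1 ∨ 2 ≤ t := by omega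
  · have : IsEmpty V := not_nonempty_iff.mp fun _ => hG hasCliqueMinor_one
    exact ⟨isEmptyElim, isEmptyElim⟩
  obtain ⟨f, hf⟩ := exists_clusteredOn_univ ht2 hG
  have hcard : (t - 1) * 2 ≤ (7 * t - 2) / 2 := by omega
  let enc : Fin (t - 1) × Fin 2 → Fin ((7 * t - 2) / 2) := Fin.castLE hcard ∘ finProdFinEquiv
  have henc : enc.Injective := (Fin.castLE_injective hcard).comp finProdFinEquiv.injective
  exact ⟨enc ∘ f, (hf.of_eq_imp_eq fun y _ z _ h => henc h).ncard_supp_le⟩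

/-- Assuming the Norine–Thomas theorem (every sufficiently large
`(t+1)`-connected graph has a `K_t`-minor), every graph with no `K_t`-minor
admits a vertex partition into `⌈(7t−3)/2⌉` parts such that every monochromatic
component has bounded size. -/
theorem stmt11
    (NT : ∀ t : ℕ, 0 < t → ∃ N : ℕ,
      ∀ (V : Type) (_ : Fintype V) (G : SimpleGraph V),
        KConnected (t + 1) G → N ≤ (Set.univ : Set V).ncard →
          HasCliqueMinor G t) :
    ∀ t : ℕ, 0 < t → ∃ M : ℕ,
      ∀ (V : Type) (_ : Fintype V) (G : SimpleGraph V),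
        ¬ HasCliqueMinor G t →
          ∃ f : V → Fin ((7 * t - 2) / 2),
            ∀ x : V,
              (((G.induce {y | f y = f x}).connectedComponentMk
                  ⟨x, rfl⟩).supp).ncard ≤ M :=
  stmt11_general
end

section
/- For every odd integer k ≥ 5 and every integer n with 4 ≤ n ≤ k − 1, there exists a graph G with a vertex v of degree n such that: every neighbour of v has degree exactly (3/2)(k−1) in G; between every pair of distinct vertices of V(G) − {v} there are k internally disjoint paths; and for every neighbour w of v, the contracted graph G/vw is not k-connected. -/
open SimpleGraph

/-!
Let `p = (k - 1) / 2`. In `C_n · K_p` plus the hub `v`, the hub has the `n` neighbours `w_i`, and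
`w_i` has `(p - 1) + 2p + 1 = 3p` neighbours. Two non-adjacent vertices in layers `i` and `i + d`
are joined by `p` paths running forward around the cycle, one in each colour, `p` running
backward, and one through `v`; a vertex other than the ends can lie on only one of them. After
contracting `v w_i`, the `2p` vertices `v`, `H_i - w_i` and `H_{i+2}` separate `H_{i+1}` from
`H_{i+3}`, which is a different layer because `n ≥ 4`.
-/

namespace ZMod

theorem add_natCast_inj {n : ℕ} (i : ZMod n) {s t : ℕ} (hs : s < n) (ht : t < n) :
    i + s = i + t ↔ s = t := by
  rw [add_right_inj, natCast_eq_natCast_iff', Nat.mod_eq_of_lt hs, Nat.mod_eq_of_lt ht]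

theorem add_natCast_ne_self {n : ℕ} (i : ZMod n) {t : ℕ} (h0 : 0 < t) (ht : t < n) :
    i + t ≠ i := by
  simpa using (add_natCast_inj i ht (by omega : 0 < n)).not.mpr h0.ne'

theorem natCast_ne_natCast_of_lt {n s t : ℕ} (hst : s < t) (ht : t < n) : (s : ZMod n) ≠ t := by
  simpa using (add_natCast_inj 0 (hst.trans ht) ht).not.mpr hst.ne

end ZMod

namespace SimpleGraph

variable {V : Type*} {G : SimpleGraph V}

theorem exists_walk_support_eq_map_range (s : ℕ → V) :
    ∀ m, (∀ t < m, G.Adj (s t) (s (t + 1))) →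
      ∃ W : G.Walk (s 0) (s m), W.support = (List.range (m + 1)).map s
  | 0, _ => ⟨.nil, rfl⟩
  | m + 1, h => by
    obtain ⟨W, hW⟩ := exists_walk_support_eq_map_range s m fun t ht => h t (by omega)
    exact ⟨W.concat (h m m.lt_succ_self), by
      rw [Walk.support_concat, hW, List.range_succ (n := m + 1), List.map_append,
        List.map_singleton]⟩

theorem exists_path_of_injOn (s : ℕ → V) (m : ℕ) (hadj : ∀ t < m, G.Adj (s t) (s (t + 1)))
    (hinj : Set.InjOn s (Set.Iic m)) :
    ∃ W : G.Walk (s 0) (s m), W.IsPath ∧ ∀ z ∈ W.support, ∃ t ≤ m, s t = z := by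
  obtain ⟨W, hW⟩ := exists_walk_support_eq_map_range s m hadj
  refine ⟨W, ?_, fun z hz => ?_⟩
  · rw [Walk.isPath_def, hW]
    exact (List.nodup_range).map_on fun a ha b hb => hinj
      (Set.mem_Iic.2 (Nat.lt_succ_iff.1 (List.mem_range.1 ha)))
      (Set.mem_Iic.2 (Nat.lt_succ_iff.1 (List.mem_range.1 hb)))
  · rw [hW, List.mem_map] at hz
    obtain ⟨t, ht, rfl⟩ := hz
    exact ⟨t, Nat.lt_succ_iff.1 (List.mem_range.1 ht), rfl⟩

theorem Walk.IsPath.append_of_support_inter {u v w : V} {p : G.Walk u v} {q : G.Walk v w}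
    (hp : p.IsPath) (hq : q.IsPath) (h : ∀ z ∈ p.support, z ∈ q.support → z = v) :
    (p.append q).IsPath := by
  rw [Walk.isPath_def, Walk.support_append, List.nodup_append]
  have hq' := hq.support_nodup
  rw [← Walk.cons_tail_support q, List.nodup_cons] at hq'
  refine ⟨hp.support_nodup, hq'.2, fun a ha b hb hab => ?_⟩
  subst hab
  exact hq'.1 (h a ha (List.mem_of_mem_tail hb) ▸ hb)

theorem Reachable.of_adj_closed {Q : V → Prop} (hQ : ∀ x y, G.Adj x y → Q x → Q y)
    {a b : V} (hab : G.Reachable a b) (ha : Q a) : Q b := by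
  obtain ⟨W⟩ := hab
  induction W with
  | nil => exact ha
  | cons h _ ih => exact ih (hQ _ _ h ha)

theorem exists_internallyDisjoint_paths_of_label {ι : Type*} [Fintype ι] {k : ℕ}
    (hk : Fintype.card ι = k) {x y : V} (f : V → ι)
    (h : ∀ o, ∃ P : G.Walk x y, P.IsPath ∧ ∀ z ∈ P.support, z = x ∨ z = y ∨ f z = o) :
    ∃ P : Fin k → G.Walk x y, (∀ i, (P i).IsPath) ∧
      ∀ i j, i ≠ j → ∀ z, z ∈ (P i).support → z ∈ (P j).support →
        z = x ∨ z = y := by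
  choose P hP hsupp using h
  let e := Fintype.equivFinOfCardEq hk
  refine ⟨fun i => P (e.symm i), fun i => hP _, fun i j hij z hi hj => ?_⟩
  rcases hsupp _ z hi with h | h | hfi
  · exact Or.inl h
  · exact Or.inr h
  rcases hsupp _ z hj with h | h | hfj
  · exact Or.inl h
  · exact Or.inr h
  · exact absurd (e.symm.injective (hfi.symm.trans hfj)) hij

theorem not_kConnected_of_not_preconnected_induce {k : ℕ} {X : Set V} (hX : X.ncard < k)
    (h : ¬ (G.induce Xᶜ).Preconnected) : ¬ KConnected k G :=
  fun hG => h (hG.2 X hX).preconnected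

theorem contract_adj_of_ne {v w : V} {x y : {x // x ≠ w}} (hx : x.1 ≠ v) (hy : y.1 ≠ v) :
    (contract G v w).Adj x y ↔ G.Adj x y := by
  simp only [contract, hx, hy, false_and, or_false]
  exact ⟨And.right, fun h => ⟨fun e => h.ne (congrArg Subtype.val e), h⟩⟩

end SimpleGraph

/-- `none` is the vertex `v`, `some (i, c)` is the vertex `c` of the clique `H_i`, and
`w_i = some (i, 0)`. -/
def cycleLexHub (n p : ℕ) [NeZero p] : SimpleGraph (Option (ZMod n × Fin p)) :=
  SimpleGraph.fromRel fun x y => match x, y with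
    | none, some y => y.2 = 0
    | some x, some y => y.1 = x.1 ∨ y.1 = x.1 + 1
    | _, _ => False

namespace cycleLexHub

section

variable {n p : ℕ} [NeZero p]

@[simp] theorem not_adj_none_none : ¬ (cycleLexHub n p).Adj none none := by
  simp [cycleLexHub]

@[simp] theorem adj_none_some {y : ZMod n × Fin p} :
    (cycleLexHub n p).Adj none (some y) ↔ y.2 = 0 := by
  simp [cycleLexHub]

@[simp] theorem adj_some_none {x : ZMod n × Fin p} :
    (cycleLexHub n p).Adj (some x) none ↔ x.2 = 0 := by
  simp [cycleLexHub]

@[simp] theorem adj_some_some {x y : ZMod n × Fin p} :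
    (cycleLexHub n p).Adj (some x) (some y) ↔
      x ≠ y ∧ (y.1 = x.1 ∨ y.1 = x.1 + 1 ∨ x.1 = y.1 + 1) := by
  simp only [cycleLexHub, fromRel_adj, ne_eq, Option.some.injEq]
  tauto

theorem exists_eq_some_zero_of_adj_none {w : Option (ZMod n × Fin p)}
    (h : (cycleLexHub n p).Adj none w) : ∃ i, w = some (i, 0) := by
  rcases w with _ | ⟨i, c⟩
  · exact absurd h not_adj_none_none
  · obtain rfl : c = 0 := adj_none_some.1 h
    exact ⟨i, rfl⟩

theorem exists_layer_path {i j : ZMod n} (a b c : Fin p) {d : ℕ} (hd : 0 < d) (hdn : d < n)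
    (hj : i + d = j) :
    ∃ P : (cycleLexHub n p).Walk (some (i, a)) (some (j, b)), P.IsPath ∧
      ∀ z ∈ P.support, z = some (i, a) ∨ z = some (j, b) ∨
        ∃ t, 0 < t ∧ t < d ∧ z = some (i + t, c) := by
  set s : ℕ → Option (ZMod n × Fin p) :=
    fun t => some (i + t, if t = 0 then a else if t = d then b else c)
  have hadj : ∀ t < d, (cycleLexHub n p).Adj (s t) (s (t + 1)) := fun t ht => by
    refine adj_some_some.2 ⟨fun h => ?_, Or.inr (Or.inl (by push_cast; ring))⟩
    have := (ZMod.add_natCast_inj i (by omega) (by omega)).1 (congrArg Prod.fst h)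
    omega
  have hinj : Set.InjOn s (Set.Iic d) := fun t ht t' ht' h =>
    (ZMod.add_natCast_inj i (lt_of_le_of_lt ht hdn) (lt_of_le_of_lt ht' hdn)).1
      (congrArg Prod.fst (Option.some_injective _ h))
  obtain ⟨P, hP, hsupp⟩ := exists_path_of_injOn s d hadj hinj
  have h0 : s 0 = some (i, a) := by simp [s]
  have hd' : s d = some (j, b) := by simp [s, hd.ne', hj]
  refine ⟨P.copy h0 hd', (Walk.isPath_copy _ _ _).2 hP, fun z hz => ?_⟩
  obtain ⟨t, htd, rfl⟩ := hsupp z (by simpa using hz)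
  rcases Nat.eq_zero_or_pos t with rfl | ht0
  · exact Or.inl h0
  rcases htd.eq_or_lt with rfl | htd
  · exact Or.inr (Or.inl hd')
  · exact Or.inr (Or.inr ⟨t, ht0, htd, by simp [s, ht0.ne', htd.ne]⟩)

theorem exists_path_to_hub (i : ZMod n) (a : Fin p) :
    ∃ P : (cycleLexHub n p).Walk (some (i, a)) none, P.IsPath ∧
      ∀ z ∈ P.support, z = none ∨ ∃ c, z = some (i, c) := by
  by_cases ha : a = 0
  · subst ha
    exact ⟨.cons (by simp) .nil, by simp, by simp⟩
  · refine ⟨.cons (v := some (i, 0)) (by simp [ha]) (.cons (by simp) .nil), by simp [ha], ?_⟩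
    simp only [Walk.support_cons, Walk.support_nil, List.mem_cons, List.not_mem_nil]
    rintro z (rfl | rfl | rfl | h)
    exacts [Or.inr ⟨a, rfl⟩, Or.inr ⟨0, rfl⟩, Or.inl rfl, h.elim]

theorem exists_path_through_hub {i j : ZMod n} (hij : i ≠ j) (a b : Fin p) :
    ∃ P : (cycleLexHub n p).Walk (some (i, a)) (some (j, b)), P.IsPath ∧
      ∀ z ∈ P.support, z = none ∨ ∃ c, z = some (i, c) ∨ z = some (j, c) := by
  obtain ⟨P, hP, hPs⟩ := exists_path_to_hub i a
  obtain ⟨Q, hQ, hQs⟩ := exists_path_to_hub j b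
  refine ⟨P.append Q.reverse, hP.append_of_support_inter hQ.reverse fun z hz hz' => ?_,
    fun z hz => ?_⟩
  · rw [Walk.support_reverse, List.mem_reverse] at hz'
    rcases hPs z hz with h | ⟨c, rfl⟩
    · exact h
    rcases hQs _ hz' with h | ⟨c', h⟩
    · exact h
    · exact absurd (congrArg Prod.fst (Option.some_injective _ h)) hij
  · rw [Walk.mem_support_append_iff, Walk.support_reverse, List.mem_reverse] at hz
    rcases hz with hz | hz
    · rcases hPs z hz with h | ⟨c, h⟩
      exacts [Or.inl h, Or.inr ⟨c, Or.inl h⟩]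
    · rcases hQs z hz with h | ⟨c, h⟩
      exacts [Or.inl h, Or.inr ⟨c, Or.inr h⟩]

end

/-- Which path of the family in `exists_internallyDisjoint_paths` may pass through a vertex. -/
def pathLabel {n p : ℕ} (i : ZMod n) (d : ℕ) :
    Option (ZMod n × Fin p) → Option (Fin p ⊕ Fin p)
  | none => none
  | some (l, c) =>
      if 0 < (l - i).val ∧ (l - i).val < d then some (.inl c)
      else if d < (l - i).val then some (.inr c) else none

theorem pathLabel_some_add {n p : ℕ} [NeZero n] (i : ZMod n) (d : ℕ) (c : Fin p) {t : ℕ}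
    (ht : t < n) :
    pathLabel i d (some (i + t, c)) =
      if 0 < t ∧ t < d then some (.inl c) else if d < t then some (.inr c) else none := by
  simp [pathLabel, ZMod.val_cast_of_lt ht]

section

variable {n p : ℕ} [NeZero p]

theorem exists_offset_of_not_adj [NeZero n] {i j : ZMod n} {a b : Fin p} (hne : (i, a) ≠ (j, b))
    (h : ¬ (cycleLexHub n p).Adj (some (i, a)) (some (j, b))) :
    ∃ d : ℕ, i + d = j ∧ 2 ≤ d ∧ d + 2 ≤ n := by
  obtain ⟨d, hdn, rfl⟩ : ∃ d < n, j = i + d := ⟨(j - i).val, ZMod.val_lt _, by simp⟩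
  refine ⟨d, rfl, by_contra fun hd => h (adj_some_some.2 ⟨hne, ?_⟩)⟩
  rcases (by omega : d = 0 ∨ d = 1 ∨ d + 1 = n) with rfl | rfl | hd
  · simp
  · simp
  · right; right
    rw [add_assoc, ← Nat.cast_add_one, hd, ZMod.natCast_self, add_zero]

theorem exists_internallyDisjoint_paths [NeZero n] {x y : Option (ZMod n × Fin p)}
    (hx : x ≠ none) (hy : y ≠ none) (hxy : x ≠ y) :
    ∃ P : Fin (2 * p + 1) → (cycleLexHub n p).Walk x y, (∀ i, (P i).IsPath) ∧
      ∀ i j, i ≠ j → ∀ z, z ∈ (P i).support → z ∈ (P j).support →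
        z = x ∨ z = y := by
  by_cases hadj : (cycleLexHub n p).Adj x y
  · exact ⟨fun _ => .cons hadj .nil, fun _ => by simp [hxy], by simp⟩
  obtain ⟨⟨i, a⟩, rfl⟩ := Option.ne_none_iff_exists'.mp hx
  obtain ⟨⟨j, b⟩, rfl⟩ := Option.ne_none_iff_exists'.mp hy
  obtain ⟨d, rfl, hd2, hdn2⟩ := exists_offset_of_not_adj (fun h => hxy (congrArg some h)) hadj
  have hdn : d < n := by omega
  have label := pathLabel_some_add (p := p) i d
  refine exists_internallyDisjoint_paths_of_label
    (by rw [Fintype.card_option, Fintype.card_sum, Fintype.card_fin, two_mul]) (pathLabel i d) ?_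
  rintro (_ | c | c)
  · have hne : i ≠ i + d := fun h => (ZMod.add_natCast_ne_self i (by omega) hdn) h.symm
    obtain ⟨P, hP, hsupp⟩ := exists_path_through_hub hne a b
    refine ⟨P, hP, fun z hz => Or.inr (Or.inr ?_)⟩
    rcases hsupp z hz with rfl | ⟨c, rfl | rfl⟩
    · rfl
    · simpa using label c (t := 0) (by omega)
    · simpa using label c hdn
  · obtain ⟨P, hP, hsupp⟩ := exists_layer_path a b c (by omega) hdn rfl
    refine ⟨P, hP, fun z hz => ?_⟩
    rcases hsupp z hz with h | h | ⟨t, ht0, htd, rfl⟩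
    · exact Or.inl h
    · exact Or.inr (Or.inl h)
    · exact Or.inr (Or.inr (by simp [label c (t := t) (by omega), ht0, htd]))
  · have hi : i + d + (n - d : ℕ) = i := by
      rw [add_assoc, ← Nat.cast_add, Nat.add_sub_cancel' hdn.le, ZMod.natCast_self, add_zero]
    obtain ⟨P, hP, hsupp⟩ := exists_layer_path b a c (by omega) (by omega) hi
    refine ⟨P.reverse, hP.reverse, fun z hz => ?_⟩
    rcases hsupp z (by simpa using hz) with h | h | ⟨t, ht0, htd, rfl⟩
    · exact Or.inr (Or.inl h)
    · exact Or.inl h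
    · have := label c (t := d + t) (by omega)
      rw [Nat.cast_add, ← add_assoc] at this
      exact Or.inr (Or.inr (by simp [this, ht0]))

theorem ncard_neighborSet_none [NeZero n] :
    ((cycleLexHub n p).neighborSet none).ncard = n := by
  have : (cycleLexHub n p).neighborSet none = Set.range fun i => some (i, 0) := by
    ext (_ | ⟨i, c⟩) <;> simp [eq_comm]
  rw [this, Set.ncard_range_of_injective fun i i' h => by simpa using h, Nat.card_zmod]

theorem ncard_neighborSet_some_zero (hn : 3 ≤ n) (i : ZMod n) :
    ((cycleLexHub n p).neighborSet (some (i, 0))).ncard = 3 * p := by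
  have : NeZero n := ⟨by omega⟩
  have hne : ∀ s t : ℕ, s < t → t < n → (s : ZMod n) ≠ t := fun _ _ =>
    ZMod.natCast_ne_natCast_of_lt
  have h1 : (1 : ZMod n) ≠ 0 := by exact_mod_cast (hne 0 1 one_pos (by omega)).symm
  have h2 : (2 : ZMod n) ≠ 0 := by exact_mod_cast (hne 0 2 two_pos (by omega)).symm
  have hnbr : (cycleLexHub n p).neighborSet (some (i, 0)) =
      ↑(Finset.insertNone (({i} ×ˢ {0}ᶜ) ∪ ({i + 1, i - 1} ×ˢ Finset.univ) :
        Finset (ZMod n × Fin p))) := by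
    ext (_ | ⟨l, c⟩)
    · simp
    · rcases eq_or_ne l i with rfl | hl
      · simp [h1, eq_comm, eq_sub_iff_add_eq]
      · simp [hl, hl.symm, eq_sub_iff_add_eq, eq_comm]
  have hdisj : Disjoint ({i} : Finset (ZMod n)) {i + 1, i - 1} := by
    simp [h1, eq_sub_iff_add_eq]
  rw [hnbr, Set.ncard_coe_finset, Finset.card_insertNone, Finset.card_union_of_disjoint
    (Finset.disjoint_product.2 (Or.inl hdisj)), Finset.card_product, Finset.card_product,
    Finset.card_pair, Finset.card_compl]
  · simp only [Finset.card_singleton, Fintype.card_fin, Finset.card_univ]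
    have := NeZero.pos p
    omega
  · intro h
    exact h2 (by linear_combination h)

def contractSeparator (i : ZMod n) : Set {x : Option (ZMod n × Fin p) // x ≠ some (i, 0)} :=
  {u | u.1 = none ∨ ∃ c, u.1 = some (i, c) ∨ u.1 = some (i + 2, c)}

theorem ncard_contractSeparator_le (i : ZMod n) :
    (contractSeparator (p := p) i).ncard ≤ 2 * p := by
  let S : Finset (ZMod n × Fin p) := ({i} ×ˢ {0}ᶜ) ∪ ({i + 2} ×ˢ Finset.univ)
  have hsub : Subtype.val '' contractSeparator (p := p) i ⊆ ↑(Finset.insertNone S) := by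
    rintro _ ⟨⟨x, hxw⟩, hx, rfl⟩
    rcases hx with h | ⟨c, h | h⟩ <;> dsimp only at h <;> subst h
    · simp
    · simpa [S] using Or.inl (b := i = i + 2) hxw
    · simp [S]
  calc (contractSeparator i).ncard = (Subtype.val '' contractSeparator i).ncard :=
        (Set.ncard_image_of_injective _ Subtype.val_injective).symm
    _ ≤ (Finset.insertNone S).card := by
        rw [← Set.ncard_coe_finset]
        exact Set.ncard_le_ncard hsub
    _ ≤ 2 * p := by
        rw [Finset.card_insertNone]
        refine (Nat.add_le_add_right (Finset.card_union_le _ _) 1).trans ?_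
        simp only [Finset.card_product, Finset.card_singleton, Finset.card_compl,
          Fintype.card_fin, Finset.card_univ]
        have := NeZero.pos p
        omega

theorem exists_eq_layer_succ_of_adj {i : ZMod n} {a b : ↥(contractSeparator (p := p) i)ᶜ}
    (hab : ((contract (cycleLexHub n p) none (some (i, 0))).induce
      (contractSeparator i)ᶜ).Adj a b)
    (ha : ∃ c, a.1.1 = some (i + 1, c)) : ∃ c, b.1.1 = some (i + 1, c) := by
  obtain ⟨⟨_ | ⟨l, c'⟩, hbw⟩, hbX⟩ := b
  · exact absurd (Or.inl rfl) hbX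
  obtain ⟨c, hc⟩ := ha
  rw [induce_adj, contract_adj_of_ne (by simp [hc]) (by simp), hc, adj_some_some] at hab
  obtain ⟨-, rfl | rfl | h⟩ := hab
  · exact ⟨c', rfl⟩
  · exact absurd (Or.inr ⟨c', Or.inr (by simp [add_assoc, one_add_one_eq_two])⟩) hbX
  · exact absurd (Or.inr ⟨c', Or.inl (by simp only [add_right_cancel h])⟩) hbX

theorem not_kConnected_contract (hn : 4 ≤ n) (i : ZMod n) :
    ¬ KConnected (2 * p + 1) (contract (cycleLexHub n p) none (some (i, 0))) := by
  have : NeZero n := ⟨by omega⟩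
  have hne : ∀ s t : ℕ, s < t → t < n → (s : ZMod n) ≠ t := fun _ _ =>
    ZMod.natCast_ne_natCast_of_lt
  have h10 : (1 : ZMod n) ≠ 0 := by exact_mod_cast (hne 0 1 (by omega) (by omega)).symm
  have h30 : (3 : ZMod n) ≠ 0 := by exact_mod_cast (hne 0 3 (by omega) (by omega)).symm
  have h12 : (1 : ZMod n) ≠ 2 := by exact_mod_cast hne 1 2 (by omega) (by omega)
  have h31 : (3 : ZMod n) ≠ 1 := by exact_mod_cast (hne 1 3 (by omega) (by omega)).symm
  have h32 : (3 : ZMod n) ≠ 2 := by exact_mod_cast (hne 2 3 (by omega) (by omega)).symm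
  refine not_kConnected_of_not_preconnected_induce (X := contractSeparator i)
    (by have := ncard_contractSeparator_le (p := p) i; omega) fun hconn => ?_
  have hw1 : (some (i + 1, 0) : Option (ZMod n × Fin p)) ≠ some (i, 0) := by simp [h10]
  have hw3 : (some (i + 3, 0) : Option (ZMod n × Fin p)) ≠ some (i, 0) := by simp [h30]
  have hX1 : ⟨_, hw1⟩ ∉ contractSeparator i := by simp [contractSeparator, h10, h12]
  have hX3 : ⟨_, hw3⟩ ∉ contractSeparator i := by simp [contractSeparator, h30, h32]
  obtain ⟨c, hc⟩ := (hconn ⟨_, hX1⟩ ⟨_, hX3⟩).of_adj_closed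
    (fun _ _ => exists_eq_layer_succ_of_adj) ⟨0, rfl⟩
  exact h31 (add_left_cancel (congrArg Prod.fst (Option.some_injective _ hc)))

end

end cycleLexHub

theorem stmt12_general (k n : ℕ) (hk : Odd k) (hn4 : 4 ≤ n)
    (hnk : n ≤ k - 1) :
    ∃ (V : Type) (_ : Fintype V) (_ : DecidableEq V)
      (G : SimpleGraph V) (v : V),
      (G.neighborSet v).ncard = n ∧
      (∀ w ∈ G.neighborSet v, 2 * (G.neighborSet w).ncard = 3 * (k - 1)) ∧
      (∀ x y : V, x ≠ v → y ≠ v → x ≠ y →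
        ∃ P : Fin k → G.Walk x y, (∀ i, (P i).IsPath) ∧
          ∀ i j, i ≠ j → ∀ z, z ∈ (P i).support → z ∈ (P j).support →
            z = x ∨ z = y) ∧
      (∀ w, ∀ hw : G.Adj v w, ¬ KConnected k (contract G v w)) := by
  obtain ⟨p, rfl⟩ := hk
  have : NeZero n := ⟨by omega⟩
  have : NeZero p := ⟨by omega⟩
  refine ⟨_, inferInstance, inferInstance, cycleLexHub n p, none,
    cycleLexHub.ncard_neighborSet_none, fun w hw => ?_,
    fun x y hx hy hxy => cycleLexHub.exists_internallyDisjoint_paths hx hy hxy, fun w hw => ?_⟩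
  · obtain ⟨i, rfl⟩ := cycleLexHub.exists_eq_some_zero_of_adj_none hw
    rw [cycleLexHub.ncard_neighborSet_some_zero (by omega)]
    omega
  · obtain ⟨i, rfl⟩ := cycleLexHub.exists_eq_some_zero_of_adj_none hw
    exact cycleLexHub.not_kConnected_contract hn4 i

/-- The degree bound `(3/2)k − 1` in the contractibility theorem is best
possible: for odd `k ≥ 5` and `4 ≤ n ≤ k − 1` there is a graph `G` with a
vertex `v` of degree `n` whose neighbours all have degree exactly
`(3/2)(k−1)`, such that every pair of distinct vertices other than `v` is
joined by `k` internally disjoint paths, yet no contraction `G/vw` of an edge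
at `v` is `k`-connected. -/
theorem stmt12 (k n : ℕ) (hk : Odd k) (hk5 : 5 ≤ k) (hn4 : 4 ≤ n)
    (hnk : n ≤ k - 1) :
    ∃ (V : Type) (_ : Fintype V) (_ : DecidableEq V)
      (G : SimpleGraph V) (v : V),
      (G.neighborSet v).ncard = n ∧
      (∀ w ∈ G.neighborSet v, 2 * (G.neighborSet w).ncard = 3 * (k - 1)) ∧
      (∀ x y : V, x ≠ v → y ≠ v → x ≠ y →
        ∃ P : Fin k → G.Walk x y, (∀ i, (P i).IsPath) ∧
          ∀ i j, i ≠ j → ∀ z, z ∈ (P i).support → z ∈ (P j).support →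
            z = x ∨ z = y) ∧
      (∀ w, ∀ hw : G.Adj v w, ¬ KConnected k (contract G v w)) :=
  stmt12_general k n hk hn4 hnk
end
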